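/- Let fA (x₁, x₂) = (−x₁ + x₂³, −x₁ − x₂) and fB (x₁, x₂) = (−x₁, −x₂) be vector fields on ℝ × ℝ, and for k > 0 let S k = {(x₁, x₂) : x₁²/2 + x₂⁴/4 < k}. Then for every k > 0 the sublevel set S k is invariant under arbitrary switching between fA and fB: for every ω ∈ S k and every ν reachable from ω in the reflexive-transitive closure of the union of the fA-flow relation and the fB-flow relation, ν ∈ S k. -/

import Mathlib

/-- The vector field `fA (x₁, x₂) = (−x₁ + x₂³, −x₁ − x₂)`. -/
def fA (x : ℝ × ℝ) : ℝ × ℝ := (-x.1 + x.2 ^ 3, -x.1 - x.2)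

/-- The vector field `fB (x₁, x₂) = (−x₁, −x₂)`. -/
def fB (x : ℝ × ℝ) : ℝ × ℝ := (-x.1, -x.2)

/-- The flow relation for a vector field `g` on `ℝ × ℝ`. -/
def FlowRel (g : ℝ × ℝ → ℝ × ℝ) (ω ν : ℝ × ℝ) : Prop :=
  ∃ t : ℝ, 0 ≤ t ∧ ∃ φ : ℝ → ℝ × ℝ, φ 0 = ω ∧ φ t = ν ∧
    ∀ s ∈ Set.Icc (0 : ℝ) t, HasDerivWithinAt φ (g (φ s)) (Set.Icc (0 : ℝ) t) s

/-- The sublevel set `S k = {(x₁, x₂) : x₁²/2 + x₂⁴/4 < k}`. -/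
def S (k : ℝ) : Set (ℝ × ℝ) := {x : ℝ × ℝ | x.1 ^ 2 / 2 + x.2 ^ 4 / 4 < k}

/-!
The function `V x = x₁²/2 + x₂⁴/4`, whose strict sublevel sets are the `S k`, is a common
Lyapunov function of `fA` and `fB`: its derivative along `fA` is
`x₁ (−x₁ + x₂³) + x₂³ (−x₁ − x₂) = −x₁² − x₂⁴`, the cross terms cancelling, and along `fB` it is
`−x₁² − x₂⁴` as well. Hence `V` does not increase along any trajectory of either field, and so
not along any switching sequence either.
-/

theorem Relation.ReflTransGen.le_of_forall_rel_le {α β : Type*} [Preorder β] {r : α → α → Prop}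
    {V : α → β} (hr : ∀ a b, r a b → V b ≤ V a) {a b : α} (hab : Relation.ReflTransGen r a b) :
    V b ≤ V a := by
  induction hab with
  | refl => exact le_rfl
  | tail _ hbc ih => exact (hr _ _ hbc).trans ih

theorem FlowRel.le_of_hasFDerivAt {g : ℝ × ℝ → ℝ × ℝ} {V : ℝ × ℝ → ℝ}
    {V' : ℝ × ℝ → ℝ × ℝ →L[ℝ] ℝ} (hV : ∀ x, HasFDerivAt V (V' x) x) (hg : ∀ x, V' x (g x) ≤ 0)
    {ω ν : ℝ × ℝ} (h : FlowRel g ω ν) : V ν ≤ V ω := by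
  obtain ⟨t, ht, φ, rfl, rfl, hφ⟩ := h
  have hVφ : ∀ s ∈ Set.Icc 0 t,
      HasDerivWithinAt (V ∘ φ) (V' (φ s) (g (φ s))) (Set.Icc 0 t) s :=
    fun s hs => (hV (φ s)).comp_hasDerivWithinAt s (hφ s hs)
  have hanti : AntitoneOn (V ∘ φ) (Set.Icc 0 t) :=
    antitoneOn_of_hasDerivWithinAt_nonpos (convex_Icc 0 t)
      (fun s hs => (hVφ s hs).continuousWithinAt)
      (fun s hs => (hVφ s (interior_subset hs)).mono interior_subset) (fun s _ => hg (φ s))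
  exact hanti (Set.left_mem_Icc.2 ht) (Set.right_mem_Icc.2 ht) ht

noncomputable def lyapunov (x : ℝ × ℝ) : ℝ := x.1 ^ 2 / 2 + x.2 ^ 4 / 4

def lyapunovDeriv (x : ℝ × ℝ) : ℝ × ℝ →L[ℝ] ℝ :=
  x.1 • ContinuousLinearMap.fst ℝ ℝ ℝ + x.2 ^ 3 • ContinuousLinearMap.snd ℝ ℝ ℝ

theorem hasFDerivAt_lyapunov (x : ℝ × ℝ) : HasFDerivAt lyapunov (lyapunovDeriv x) x := by
  have h := (((hasFDerivAt_fst (𝕜 := ℝ) (p := x)).pow 2).mul_const (1 / 2 : ℝ)).add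
    (((hasFDerivAt_snd (𝕜 := ℝ) (p := x)).pow 4).mul_const (1 / 4 : ℝ))
  refine (h.congr_fderiv ?_).congr_of_eventuallyEq (.of_forall fun y => ?_)
  · ext <;> simp [lyapunovDeriv]
  · simp only [lyapunov, Pi.add_apply]
    ring

theorem lyapunovDeriv_apply (x v : ℝ × ℝ) : lyapunovDeriv x v = x.1 * v.1 + x.2 ^ 3 * v.2 := by
  simp [lyapunovDeriv]

theorem lyapunovDeriv_fA_nonpos (x : ℝ × ℝ) : lyapunovDeriv x (fA x) ≤ 0 := by
  rw [lyapunovDeriv_apply, fA]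
  nlinarith [sq_nonneg x.1, sq_nonneg (x.2 ^ 2)]

theorem lyapunovDeriv_fB_nonpos (x : ℝ × ℝ) : lyapunovDeriv x (fB x) ≤ 0 := by
  rw [lyapunovDeriv_apply, fB]
  nlinarith [sq_nonneg x.1, sq_nonneg (x.2 ^ 2)]

theorem sublevel_invariant_arbitrary_switching_general (k : ℝ) :
    ∀ ω ∈ S k, ∀ ν, Relation.ReflTransGen (fun a b => FlowRel fA a b ∨ FlowRel fB a b) ω ν →
      ν ∈ S k := by
  intro ω hω ν hων
  have hstep : ∀ a b, (FlowRel fA a b ∨ FlowRel fB a b) → lyapunov b ≤ lyapunov a := by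
    rintro a b (hA | hB)
    · exact hA.le_of_hasFDerivAt hasFDerivAt_lyapunov lyapunovDeriv_fA_nonpos
    · exact hB.le_of_hasFDerivAt hasFDerivAt_lyapunov lyapunovDeriv_fB_nonpos
  exact (hων.le_of_forall_rel_le hstep).trans_lt hω

theorem sublevel_invariant_arbitrary_switching (k : ℝ) (hk : 0 < k) :
    ∀ ω ∈ S k, ∀ ν, Relation.ReflTransGen (fun a b => FlowRel fA a b ∨ FlowRel fB a b) ω ν →
      ν ∈ S k :=
  sublevel_invariant_arbitrary_switching_general k
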